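/- Let φ : ℝ² → ℝ be twice continuously differentiable with compact support contained in the open unit disc D1, and let f = d²φ be the symmetric 2-tensor field with components f11 = ∂²φ/∂x1², f12 = ∂²φ/∂x1∂x2, f22 = ∂²φ/∂x2². Then for every x ∈ ℝ²: φ(x) = (1/(2 u2)) ∫₀^∞ Lf(x + s e2) ds = −(1/(2 u2)) ∫₀^∞ Mf(x + s e1) ds. -/

import Mathlib

noncomputable section

open MeasureTheory

/-- The divergent beam transform `X_w h (x) = ∫₀^∞ h(x + t w) dt`. -/
def Xbeam (w : ℝ × ℝ) (h : ℝ × ℝ → ℝ) (x : ℝ × ℝ) : ℝ :=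
  ∫ t in Set.Ioi (0 : ℝ), h (x + t • w)

/-- The k-th moment divergent beam transform `X_w^k h (x) = ∫₀^∞ t^k h(x + t w) dt`. -/
def Xmom (k : ℕ) (w : ℝ × ℝ) (h : ℝ × ℝ → ℝ) (x : ℝ × ℝ) : ℝ :=
  ∫ t in Set.Ioi (0 : ℝ), t ^ k * h (x + t • w)

/-- The directional derivative `D_w h = w ⋅ ∇h`. -/
def Dir (w : ℝ × ℝ) (h : ℝ × ℝ → ℝ) (x : ℝ × ℝ) : ℝ :=
  fderiv ℝ h x w

/-- Support contained in the open unit disc `D1`. -/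
def SuppInDisc (h : ℝ × ℝ → ℝ) : Prop :=
  ∀ x : ℝ × ℝ, 1 ≤ x.1 ^ 2 + x.2 ^ 2 → h x = 0

/-- The longitudinal V-line transform. -/
def VlineL (u1 u2 : ℝ) (f11 f12 f22 : ℝ × ℝ → ℝ) : ℝ × ℝ → ℝ :=
  Xbeam (u1, u2) (fun y => u1 ^ 2 * f11 y + 2 * u1 * u2 * f12 y + u2 ^ 2 * f22 y)
    + Xbeam (-u1, u2) (fun y => u1 ^ 2 * f11 y - 2 * u1 * u2 * f12 y + u2 ^ 2 * f22 y)

/-- The transverse V-line transform. -/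
def VlineT (u1 u2 : ℝ) (f11 f12 f22 : ℝ × ℝ → ℝ) : ℝ × ℝ → ℝ :=
  Xbeam (u1, u2) (fun y => u2 ^ 2 * f11 y - 2 * u1 * u2 * f12 y + u1 ^ 2 * f22 y)
    + Xbeam (-u1, u2) (fun y => u2 ^ 2 * f11 y + 2 * u1 * u2 * f12 y + u1 ^ 2 * f22 y)

/-- The mixed V-line transform. -/
def VlineM (u1 u2 : ℝ) (f11 f12 f22 : ℝ × ℝ → ℝ) : ℝ × ℝ → ℝ :=
  Xbeam (u1, u2) (fun y => -(u1 * u2) * f11 y + (u1 ^ 2 - u2 ^ 2) * f12 y + u1 * u2 * f22 y)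
    + Xbeam (-u1, u2) (fun y => u1 * u2 * f11 y + (u1 ^ 2 - u2 ^ 2) * f12 y - u1 * u2 * f22 y)

/-- The k-th moment longitudinal V-line transform. -/
def VlineLk (k : ℕ) (u1 u2 : ℝ) (f11 f12 f22 : ℝ × ℝ → ℝ) : ℝ × ℝ → ℝ :=
  Xmom k (u1, u2) (fun y => u1 ^ 2 * f11 y + 2 * u1 * u2 * f12 y + u2 ^ 2 * f22 y)
    + Xmom k (-u1, u2) (fun y => u1 ^ 2 * f11 y - 2 * u1 * u2 * f12 y + u2 ^ 2 * f22 y)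

/-- The k-th moment transverse V-line transform. -/
def VlineTk (k : ℕ) (u1 u2 : ℝ) (f11 f12 f22 : ℝ × ℝ → ℝ) : ℝ × ℝ → ℝ :=
  Xmom k (u1, u2) (fun y => u2 ^ 2 * f11 y - 2 * u1 * u2 * f12 y + u1 ^ 2 * f22 y)
    + Xmom k (-u1, u2) (fun y => u2 ^ 2 * f11 y + 2 * u1 * u2 * f12 y + u1 ^ 2 * f22 y)

/-- The k-th moment mixed V-line transform. -/
def VlineMk (k : ℕ) (u1 u2 : ℝ) (f11 f12 f22 : ℝ × ℝ → ℝ) : ℝ × ℝ → ℝ :=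
  Xmom k (u1, u2) (fun y => -(u1 * u2) * f11 y + (u1 ^ 2 - u2 ^ 2) * f12 y + u1 * u2 * f22 y)
    + Xmom k (-u1, u2) (fun y => u1 * u2 * f11 y + (u1 ^ 2 - u2 ^ 2) * f12 y - u1 * u2 * f22 y)

/-!
For a compactly supported `C¹` function `g`, the fundamental theorem of calculus along the ray
`t ↦ x + t • w` gives `∫₀^∞ D_w g (x + t • w) dt = -g x`. When `f = d²φ`, the integrand of the
branch of a V-line transform in direction `d` is `d²φ (d, b)` for a suitable `b`, so that branch
equals `-∂_b φ`. For `L` the two branches use `b = u` and `b = v`, with `u + v = (0, 2 u2)`; for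
`M` they use `b = (-u2, u1)` and `b = (-u2, -u1)`, with sum `(-2 u2, 0)`. Hence `Lf = -2 u2 ∂₂φ`
and `Mf = 2 u2 ∂₁φ`, and one more ray integral along `e2`, resp. `e1`, recovers `φ`.
-/

theorem HasCompactSupport.comp_ray {E F : Type*} [NormedAddCommGroup E] [NormedSpace ℝ E]
    [Zero F] {g : E → F} (hg : HasCompactSupport g) (x : E) {w : E} (hw : w ≠ 0) :
    HasCompactSupport fun t : ℝ => g (x + t • w) :=
  hg.comp_isClosedEmbedding ((Homeomorph.addLeft x).isClosedEmbedding.comp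
    (isClosedEmbedding_smul_left hw))

theorem HasCompactSupport.integral_Ioi_fderiv_ray {E F : Type*} [NormedAddCommGroup E]
    [NormedSpace ℝ E] [NormedAddCommGroup F] [NormedSpace ℝ F] [CompleteSpace F] {g : E → F}
    (hg : ContDiff ℝ 1 g) (hcs : HasCompactSupport g) (x : E) {w : E} (hw : w ≠ 0) :
    ∫ t in Set.Ioi (0 : ℝ), fderiv ℝ g (x + t • w) w = -g x := by
  have hray : ∀ t : ℝ, HasDerivAt (fun t : ℝ => g (x + t • w)) (fderiv ℝ g (x + t • w) w) t :=
    fun t => ((hg.differentiable one_ne_zero) _).hasFDerivAt.comp_hasDerivAt t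
      (((hasDerivAt_id t).smul_const w).const_add x |>.congr_deriv (one_smul ℝ w))
  have h := HasCompactSupport.integral_Ioi_deriv_eq (f := fun t : ℝ => g (x + t • w))
    (hg.comp (by fun_prop)) (hcs.comp_ray x hw) 0
  simpa only [(hray _).deriv, zero_smul, add_zero] using h

theorem fderiv_fderiv_apply_const {E F : Type*} [NormedAddCommGroup E] [NormedSpace ℝ E]
    [NormedAddCommGroup F] [NormedSpace ℝ F] {φ : E → F} {y : E}
    (h : DifferentiableAt ℝ (fderiv ℝ φ) y) (b d : E) :
    fderiv ℝ (fun z => fderiv ℝ φ z b) y d = fderiv ℝ (fderiv ℝ φ) y d b := by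
  rw [fderiv_clm_apply h (differentiableAt_const b)]
  simp

theorem ContinuousLinearMap.apply_apply_prod_of_symm (B : ℝ × ℝ →L[ℝ] ℝ × ℝ →L[ℝ] ℝ)
    (hB : B (0, 1) (1, 0) = B (1, 0) (0, 1)) (d b : ℝ × ℝ) :
    B d b = d.1 * b.1 * B (1, 0) (1, 0) + (d.1 * b.2 + d.2 * b.1) * B (1, 0) (0, 1)
      + d.2 * b.2 * B (0, 1) (0, 1) := by
  obtain ⟨d1, d2⟩ := d
  obtain ⟨b1, b2⟩ := b
  have hd : ((d1, d2) : ℝ × ℝ) = d1 • (1, 0) + d2 • (0, 1) := by simp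
  have hb : ((b1, b2) : ℝ × ℝ) = b1 • (1, 0) + b2 • (0, 1) := by simp
  conv_lhs => rw [hd, hb]
  simp only [map_add, map_smul, add_apply, smul_apply, smul_eq_mul, hB]
  ring

theorem SuppInDisc.hasCompactSupport {h : ℝ × ℝ → ℝ} (hh : SuppInDisc h) :
    HasCompactSupport h :=
  HasCompactSupport.intro (isCompact_closedBall 0 1) fun y hy => hh y <| by
    rw [Metric.mem_closedBall, dist_zero_right, Prod.norm_def, max_le_iff, not_and_or,
      Real.norm_eq_abs, Real.norm_eq_abs, not_le, not_le, ← one_lt_sq_iff_one_lt_abs,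
      ← one_lt_sq_iff_one_lt_abs] at hy
    rcases hy with hy | hy <;> nlinarith [sq_nonneg y.1, sq_nonneg y.2]

theorem Xbeam_const_mul (w : ℝ × ℝ) (c : ℝ) (h : ℝ × ℝ → ℝ) (x : ℝ × ℝ) :
    Xbeam w (fun y => c * h y) x = c * Xbeam w h x :=
  integral_const_mul c _

section SecondDerivative

variable {φ f11 f12 f22 : ℝ × ℝ → ℝ} (hφ : ContDiff ℝ 2 φ)
  (hf11 : ∀ y : ℝ × ℝ, f11 y =
    fderiv ℝ (fun z => fderiv ℝ φ z ((1 : ℝ), (0 : ℝ))) y ((1 : ℝ), (0 : ℝ)))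
  (hf12 : ∀ y : ℝ × ℝ, f12 y =
    fderiv ℝ (fun z => fderiv ℝ φ z ((0 : ℝ), (1 : ℝ))) y ((1 : ℝ), (0 : ℝ)))
  (hf22 : ∀ y : ℝ × ℝ, f22 y =
    fderiv ℝ (fun z => fderiv ℝ φ z ((0 : ℝ), (1 : ℝ))) y ((0 : ℝ), (1 : ℝ)))
include hφ hf11 hf12 hf22

theorem fderiv_fderiv_apply_eq_hessian (y d b : ℝ × ℝ) :
    fderiv ℝ (fun z => fderiv ℝ φ z b) y d
      = d.1 * b.1 * f11 y + (d.1 * b.2 + d.2 * b.1) * f12 y + d.2 * b.2 * f22 y := by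
  have hdiff : Differentiable ℝ (fderiv ℝ φ) :=
    (hφ.fderiv_right (m := 1) one_add_one_eq_two.le).differentiable one_ne_zero
  have hsymm := hφ.contDiffAt.isSymmSndFDerivAt (x := y) (by simp)
  simp only [hf11, hf12, hf22, fderiv_fderiv_apply_const (hdiff y)]
  exact (fderiv ℝ (fderiv ℝ φ) y).apply_apply_prod_of_symm (hsymm _ _) d b

theorem Xbeam_hessian_eq_neg_fderiv (hcs : HasCompactSupport φ) {d : ℝ × ℝ} (hd : d ≠ 0)
    (b x : ℝ × ℝ) :
    Xbeam d (fun y => d.1 * b.1 * f11 y + (d.1 * b.2 + d.2 * b.1) * f12 y + d.2 * b.2 * f22 y) x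
      = -fderiv ℝ φ x b := by
  simp only [Xbeam, ← fderiv_fderiv_apply_eq_hessian hφ hf11 hf12 hf22]
  exact (hcs.fderiv_apply (𝕜 := ℝ) b).integral_Ioi_fderiv_ray
    ((hφ.fderiv_right (m := 1) one_add_one_eq_two.le).clm_apply contDiff_const) x hd

theorem VlineL_eq_fderiv (hcs : HasCompactSupport φ) {u1 u2 : ℝ} (hu2 : u2 ≠ 0) :
    VlineL u1 u2 f11 f12 f22 = fun y => -(2 * u2) * fderiv ℝ φ y (0, 1) := by
  funext y
  have hu : ((u1, u2) : ℝ × ℝ) ≠ 0 := by simp [hu2]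
  have hv : ((-u1, u2) : ℝ × ℝ) ≠ 0 := by simp [hu2]
  calc VlineL u1 u2 f11 f12 f22 y = -fderiv ℝ φ y (u1, u2) + -fderiv ℝ φ y (-u1, u2) := by
        rw [← Xbeam_hessian_eq_neg_fderiv hφ hf11 hf12 hf22 hcs hu,
          ← Xbeam_hessian_eq_neg_fderiv hφ hf11 hf12 hf22 hcs hv]
        simp only [VlineL, Pi.add_apply]
        congr 3 <;> (funext z; ring)
    _ = -fderiv ℝ φ y ((2 * u2) • (0, 1)) := by
        rw [← neg_add, ← map_add]
        congr 2
        ext <;> simp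
        ring
    _ = -(2 * u2) * fderiv ℝ φ y (0, 1) := by rw [map_smul, smul_eq_mul]; ring

theorem VlineM_eq_fderiv (hcs : HasCompactSupport φ) {u1 u2 : ℝ} (hu2 : u2 ≠ 0) :
    VlineM u1 u2 f11 f12 f22 = fun y => 2 * u2 * fderiv ℝ φ y (1, 0) := by
  funext y
  have hu : ((u1, u2) : ℝ × ℝ) ≠ 0 := by simp [hu2]
  have hv : ((-u1, u2) : ℝ × ℝ) ≠ 0 := by simp [hu2]
  calc VlineM u1 u2 f11 f12 f22 y = -fderiv ℝ φ y (-u2, u1) + -fderiv ℝ φ y (-u2, -u1) := by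
        rw [← Xbeam_hessian_eq_neg_fderiv hφ hf11 hf12 hf22 hcs hu,
          ← Xbeam_hessian_eq_neg_fderiv hφ hf11 hf12 hf22 hcs hv]
        simp only [VlineM, Pi.add_apply]
        congr 3 <;> (funext z; ring)
    _ = -fderiv ℝ φ y ((-(2 * u2)) • (1, 0)) := by
        rw [← neg_add, ← map_add]
        congr 2
        ext <;> simp
        ring
    _ = 2 * u2 * fderiv ℝ φ y (1, 0) := by rw [map_smul, smul_eq_mul]; ring

end SecondDerivative

theorem recover_potential_d2_general
    (u1 u2 : ℝ) (hu2 : 0 < u2)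
    (φ : ℝ × ℝ → ℝ) (hφ : ContDiff ℝ 2 φ) (hsupp : SuppInDisc φ)
    (f11 f12 f22 : ℝ × ℝ → ℝ)
    (hf11 : ∀ y : ℝ × ℝ, f11 y =
      fderiv ℝ (fun z => fderiv ℝ φ z ((1 : ℝ), (0 : ℝ))) y ((1 : ℝ), (0 : ℝ)))
    (hf12 : ∀ y : ℝ × ℝ, f12 y =
      fderiv ℝ (fun z => fderiv ℝ φ z ((0 : ℝ), (1 : ℝ))) y ((1 : ℝ), (0 : ℝ)))
    (hf22 : ∀ y : ℝ × ℝ, f22 y =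
      fderiv ℝ (fun z => fderiv ℝ φ z ((0 : ℝ), (1 : ℝ))) y ((0 : ℝ), (1 : ℝ)))
    (x : ℝ × ℝ) :
    φ x = (1 / (2 * u2)) * Xbeam ((0 : ℝ), (1 : ℝ)) (VlineL u1 u2 f11 f12 f22) x ∧
    φ x = -(1 / (2 * u2)) * Xbeam ((1 : ℝ), (0 : ℝ)) (VlineM u1 u2 f11 f12 f22) x := by
  have hcs := hsupp.hasCompactSupport
  have hφ1 : ContDiff ℝ 1 φ := hφ.of_le one_le_two
  have hbeam : ∀ w : ℝ × ℝ, w ≠ 0 → Xbeam w (fun y => fderiv ℝ φ y w) x = -φ x :=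
    fun w hw => hcs.integral_Ioi_fderiv_ray hφ1 x hw
  constructor
  · rw [VlineL_eq_fderiv hφ hf11 hf12 hf22 hcs hu2.ne', Xbeam_const_mul,
      hbeam _ (by simp)]
    field_simp
  · rw [VlineM_eq_fderiv hφ hf11 hf12 hf22 hcs hu2.ne', Xbeam_const_mul,
      hbeam _ (by simp)]
    field_simp

/-- reconstruction of a potential `φ` with `f = d²φ` from `Lf` or `Mf`. -/
theorem recover_potential_d2
    (u1 u2 : ℝ) (hu : u1 ^ 2 + u2 ^ 2 = 1) (hu1 : 0 < u1) (hu2 : 0 < u2)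
    (φ : ℝ × ℝ → ℝ) (hφ : ContDiff ℝ 2 φ) (hsupp : SuppInDisc φ)
    (f11 f12 f22 : ℝ × ℝ → ℝ)
    (hf11 : ∀ y : ℝ × ℝ, f11 y =
      fderiv ℝ (fun z => fderiv ℝ φ z ((1 : ℝ), (0 : ℝ))) y ((1 : ℝ), (0 : ℝ)))
    (hf12 : ∀ y : ℝ × ℝ, f12 y =
      fderiv ℝ (fun z => fderiv ℝ φ z ((0 : ℝ), (1 : ℝ))) y ((1 : ℝ), (0 : ℝ)))
    (hf22 : ∀ y : ℝ × ℝ, f22 y =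
      fderiv ℝ (fun z => fderiv ℝ φ z ((0 : ℝ), (1 : ℝ))) y ((0 : ℝ), (1 : ℝ)))
    (x : ℝ × ℝ) :
    φ x = (1 / (2 * u2)) * Xbeam ((0 : ℝ), (1 : ℝ)) (VlineL u1 u2 f11 f12 f22) x ∧
    φ x = -(1 / (2 * u2)) * Xbeam ((1 : ℝ), (0 : ℝ)) (VlineM u1 u2 f11 f12 f22) x :=
  recover_potential_d2_general u1 u2 hu2 φ hφ hsupp f11 f12 f22 hf11 hf12 hf22 x
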